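/- Let X* be a Q-almost surely strictly positive e-variable. Then X* is a numeraire if and only if it is log-optimal, i.e. ∫ log(X/X*) dQ ≤ 0 for every e-variable X (where the integral may equal −∞). In particular, a log-optimal e-variable is unique up to Q-null sets. -/

import Mathlib

open MeasureTheory ENNReal Filter Set Topology

variable {Ω : Type*} [MeasurableSpace Ω]

/-- Ratio of extended nonnegative reals with the convention `∞/∞ = 1`
(and `x/∞ = 0`, `∞/x = ∞` for finite `x`). -/
noncomputable def ERatio (x y : ℝ≥0∞) : ℝ≥0∞ := if x = ⊤ ∧ y = ⊤ then 1 else x / y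

/-- `X` is an e-variable for the null hypothesis `Pfam`. -/
def IsEVar (Pfam : Set (Measure Ω)) (X : Ω → ℝ≥0∞) : Prop :=
  Measurable X ∧ ∀ P ∈ Pfam, ∫⁻ ω, X ω ∂P ≤ 1

/-- `Xs` is a numeraire for null `Pfam` and alternative `Q`. -/
def IsNumeraire (Pfam : Set (Measure Ω)) (Q : Measure Ω) (Xs : Ω → ℝ≥0∞) : Prop :=
  IsEVar Pfam Xs ∧ (∀ᵐ ω ∂Q, 0 < Xs ω) ∧
    ∀ X, IsEVar Pfam X → ∫⁻ ω, ERatio (X ω) (Xs ω) ∂Q ≤ 1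

/-- Positive part of an extended real, as an extended nonnegative real. -/
noncomputable def EReal.posPart (x : EReal) : ℝ≥0∞ :=
  if x = ⊤ then ⊤ else ENNReal.ofReal x.toReal

lemma measurable_ERatio {X Y : Ω → ℝ≥0∞} (hX : Measurable X) (hY : Measurable Y) :
    Measurable (fun ω => ERatio (X ω) (Y ω)) := by
  unfold ERatio
  have hs : MeasurableSet {ω | X ω = ⊤ ∧ Y ω = ⊤} := by
    have : {ω | X ω = ⊤ ∧ Y ω = ⊤} = X ⁻¹' {⊤} ∩ Y ⁻¹' {⊤} := rfl
    rw [this]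
    exact (hX (measurableSet_singleton _)).inter (hY (measurableSet_singleton _))
  exact Measurable.ite hs measurable_const (hX.div hY)

lemma posPart_coe (r : ℝ) : EReal.posPart (r : EReal) = ENNReal.ofReal r := by
  simp [EReal.posPart]

lemma posPart_bot : EReal.posPart ⊥ = 0 := by simp [EReal.posPart]

lemma posPart_top : EReal.posPart ⊤ = ⊤ := by simp [EReal.posPart]

lemma ePosPart_mono : Monotone EReal.posPart := by
  intro x y h
  unfold EReal.posPart
  rcases eq_or_ne y ⊤ with hy | hy
  · simp [hy]
  · rw [if_neg hy, if_neg (fun (hx : x = ⊤) => hy (by rw [hx] at h; exact top_le_iff.mp h))]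
    rcases eq_or_ne x ⊥ with hx | hx
    · simp [hx]
    · exact ENNReal.ofReal_le_ofReal (EReal.toReal_le_toReal h hx hy)

lemma measurable_ePosPart : Measurable EReal.posPart := by
  unfold EReal.posPart
  refine Measurable.ite (measurableSet_singleton _) measurable_const ?_
  exact ENNReal.measurable_ofReal.comp (measurable_ereal_toReal)

-- pointwise key for direction 1
lemma key1 (x : ℝ≥0∞) :
    (ENNReal.log x).posPart + (1 - x) ≤ (-(ENNReal.log x)).posPart + (x - 1) := by
  rcases eq_or_ne x 0 with rfl | hx0
  · simp [ENNReal.log_zero, EReal.posPart]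
  rcases eq_or_ne x ⊤ with rfl | hxt
  · simp [ENNReal.log_top, EReal.posPart]
  have ht : 0 < x.toReal := ENNReal.toReal_pos hx0 hxt
  rw [ENNReal.log_pos_real hx0 hxt, ← EReal.coe_neg, posPart_coe, posPart_coe]
  have hlog := Real.log_le_sub_one_of_pos ht
  have hx : x = ENNReal.ofReal x.toReal := (ENNReal.ofReal_toReal hxt).symm
  have h1x : 1 - x = ENNReal.ofReal (1 - x.toReal) := by
    rw [ENNReal.ofReal_sub _ ht.le, ENNReal.ofReal_one, ← hx]
  have hx1 : x - 1 = ENNReal.ofReal (x.toReal - 1) := by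
    rw [ENNReal.ofReal_sub _ zero_le_one, ENNReal.ofReal_one, ← hx]
  rw [h1x, hx1]
  rcases le_total x.toReal 1 with h1 | h1
  · have h0 : ENNReal.ofReal (Real.log x.toReal) = 0 := by
      rw [ENNReal.ofReal_eq_zero]
      exact Real.log_nonpos ht.le h1
    rw [h0, zero_add]
    exact le_add_right (ENNReal.ofReal_le_ofReal (by linarith))
  · have h2 : ENNReal.ofReal (1 - x.toReal) = 0 := by
      rw [ENNReal.ofReal_eq_zero]; linarith
    rw [h2, add_zero]
    exact le_add_left (ENNReal.ofReal_le_ofReal (by linarith))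

/-- `∫ log f dQ`, valued in `EReal`, interpreted as `-∞` whenever the negative
part of `log f` has infinite integral. -/
noncomputable def logInt (Q : Measure Ω) (f : Ω → ℝ≥0∞) : EReal :=
  ((∫⁻ ω, (ENNReal.log (f ω)).posPart ∂Q : ℝ≥0∞) : EReal)
    - ((∫⁻ ω, (-(ENNReal.log (f ω))).posPart ∂Q : ℝ≥0∞) : EReal)


lemma enn_coe_sub_nonpos {a b : ℝ≥0∞} (h : a ≤ b) : (a : EReal) - (b : EReal) ≤ 0 := by
  rcases eq_or_ne b ⊤ with rfl | hb
  · rw [EReal.coe_ennreal_top, EReal.sub_top]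
    exact bot_le
  · rw [EReal.sub_le_iff_le_add (Or.inl (EReal.coe_ennreal_ne_bot b)) (Or.inl ?_), zero_add]
    · exact EReal.coe_ennreal_le_coe_ennreal_iff.mpr h
    · simpa using hb

lemma enn_le_of_coe_sub_nonpos {a b : ℝ≥0∞} (hb : b ≠ ⊤)
    (h : (a : EReal) - (b : EReal) ≤ 0) : a ≤ b := by
  rw [EReal.sub_le_iff_le_add (Or.inl (EReal.coe_ennreal_ne_bot b)) (Or.inl (by simpa using hb)),
    zero_add] at h
  exact EReal.coe_ennreal_le_coe_ennreal_iff.mp h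

lemma logInt_nonpos {Ω : Type*} [MeasurableSpace Ω] (Q : Measure Ω) [IsProbabilityMeasure Q]
    {f : Ω → ℝ≥0∞} (hf : Measurable f) (hint : ∫⁻ ω, f ω ∂Q ≤ 1) : logInt Q f ≤ 0 := by
  have hmp : Measurable fun ω => (ENNReal.log (f ω)).posPart :=
    measurable_ePosPart.comp (ENNReal.measurable_log.comp hf)
  have hmn : Measurable fun ω => (-(ENNReal.log (f ω))).posPart :=
    measurable_ePosPart.comp ((ENNReal.measurable_log.comp hf).neg)
  set A := ∫⁻ ω, (ENNReal.log (f ω)).posPart ∂Q with hA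
  set B := ∫⁻ ω, (-(ENNReal.log (f ω))).posPart ∂Q with hB
  set I1 := ∫⁻ ω, (1 - f ω) ∂Q with hI1def
  set I2 := ∫⁻ ω, (f ω - 1) ∂Q with hI2def
  have key : ∀ a : ℝ≥0∞, a + (1 - a) = 1 + (a - 1) := by
    intro a
    rcases le_total a 1 with h | h
    · rw [add_tsub_cancel_of_le h, tsub_eq_zero_of_le h, add_zero]
    · rw [tsub_eq_zero_of_le h, add_zero, add_tsub_cancel_of_le h]
  have h2 : (∫⁻ ω, f ω ∂Q) + I1 = 1 + I2 := by
    calc (∫⁻ ω, f ω ∂Q) + I1 = ∫⁻ ω, (f ω + (1 - f ω)) ∂Q := (lintegral_add_left hf _).symm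
      _ = ∫⁻ ω, (1 + (f ω - 1)) ∂Q := lintegral_congr fun ω => key (f ω)
      _ = (∫⁻ (_ : Ω), 1 ∂Q) + I2 := lintegral_add_left measurable_const _
      _ = 1 + I2 := by simp
  have hI1 : I1 ≤ 1 := by
    refine le_trans (lintegral_mono fun ω => tsub_le_self) ?_
    simp
  have hI21 : I2 ≤ I1 := by
    have h3 : 1 + I2 ≤ 1 + I1 := by
      rw [← h2]
      exact add_le_add_left hint I1
    exact (ENNReal.add_le_add_iff_left (by simp)).mp h3
  have main : A + I1 ≤ B + I2 := by
    calc A + I1 = ∫⁻ ω, ((ENNReal.log (f ω)).posPart + (1 - f ω)) ∂Q :=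
          (lintegral_add_left hmp _).symm
      _ ≤ ∫⁻ ω, ((-(ENNReal.log (f ω))).posPart + (f ω - 1)) ∂Q :=
          lintegral_mono fun ω => key1 (f ω)
      _ = B + I2 := lintegral_add_left hmn _
  have hAB : A ≤ B := by
    have h4 : A + I1 ≤ B + I1 := main.trans (add_le_add_right hI21 B)
    exact (ENNReal.add_le_add_iff_right (lt_of_le_of_lt hI1 ENNReal.one_lt_top).ne).mp h4
  exact enn_coe_sub_nonpos hAB

lemma logInt_mono {Ω : Type*} [MeasurableSpace Ω] (Q : Measure Ω) {f g : Ω → ℝ≥0∞}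
    (h : ∀ᵐ ω ∂Q, ENNReal.log (f ω) ≤ ENNReal.log (g ω)) : logInt Q f ≤ logInt Q g := by
  unfold logInt
  refine EReal.sub_le_sub (EReal.coe_ennreal_le_coe_ennreal_iff.mpr ?_)
    (EReal.coe_ennreal_le_coe_ennreal_iff.mpr ?_)
  · exact lintegral_mono_ae (h.mono fun ω hω => ePosPart_mono hω)
  · exact lintegral_mono_ae (h.mono fun ω hω => ePosPart_mono (EReal.neg_le_neg_iff.mpr hω))

/-- `Xs` is log-optimal: `∫ log (X / Xs) dQ ≤ 0` for every e-variable `X`. -/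
noncomputable def IsLogOptimal (Pfam : Set (Measure Ω)) (Q : Measure Ω)
    (Xs : Ω → ℝ≥0∞) : Prop :=
  ∀ X, IsEVar Pfam X → logInt Q (fun ω => ERatio (X ω) (Xs ω)) ≤ 0

lemma ofReal_max_zero (x : ℝ) : ENNReal.ofReal (max x 0) = ENNReal.ofReal x := by
  rcases le_total x 0 with h | h
  · rw [max_eq_right h, ENNReal.ofReal_zero, ENNReal.ofReal_eq_zero.mpr h]
  · rw [max_eq_left h]

lemma key2 {t ρ nn : ℝ} (ht0 : 0 < t) (ht : t ≤ 1/2) (hρ0 : 0 ≤ ρ) (hρn : ρ ≤ nn) :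
    t*ρ + max (-(Real.log (1 - t + t*ρ))) 0
      ≤ max (Real.log (1 - t + t*ρ)) 0 + (t + 2*t^2*(nn+1)^2) := by
  have hx0 : (0:ℝ) < 1 - t + t*ρ := by nlinarith
  have h2x : (1:ℝ)/2 ≤ 1 - t + t*ρ := by nlinarith
  have hinv : (1 - t + t*ρ)⁻¹ * (1 - t + t*ρ) = 1 := inv_mul_cancel₀ hx0.ne'
  have hxinv2 : (1 - t + t*ρ)⁻¹ ≤ 2 := by
    calc (1 - t + t*ρ)⁻¹ ≤ ((1:ℝ)/2)⁻¹ := inv_anti₀ (by norm_num) h2x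
      _ = 2 := by norm_num
  have hxinv0 : 0 ≤ (1 - t + t*ρ)⁻¹ := inv_nonneg.mpr hx0.le
  have hL : 1 - (1 - t + t*ρ)⁻¹ ≤ Real.log (1 - t + t*ρ) := by
    have h := Real.log_le_sub_one_of_pos (inv_pos.mpr hx0)
    rw [Real.log_inv] at h
    linarith
  have hmax : max (Real.log (1 - t + t*ρ)) 0
      = Real.log (1 - t + t*ρ) + max (-(Real.log (1 - t + t*ρ))) 0 := by
    rcases le_total (Real.log (1 - t + t*ρ)) 0 with h | h
    · rw [max_eq_right h, max_eq_left (by linarith)]; ring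
    · rw [max_eq_left h, max_eq_right (by linarith)]; ring
  rw [hmax]
  have e2 : 1 - (1 - t + t*ρ)⁻¹ = (1 - t + t*ρ)⁻¹ * (t*(ρ-1)) := by linear_combination -hinv
  have e3 : t*(ρ-1) - (1 - t + t*ρ)⁻¹ * (t*(ρ-1)) = (1 - t + t*ρ)⁻¹ * (t*(ρ-1))^2 := by
    linear_combination (t*(ρ-1)) * e2
  have h6 : (1 - t + t*ρ)⁻¹ * (t*(ρ-1))^2 ≤ 2 * (t*(ρ-1))^2 :=
    mul_le_mul_of_nonneg_right hxinv2 (sq_nonneg _)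
  have h7 : (t*(ρ-1))^2 ≤ t^2*(nn+1)^2 := by
    have h8 : (0:ℝ) ≤ nn + 2 - ρ := by linarith
    have h9 : (0:ℝ) ≤ nn + ρ := by linarith
    nlinarith [mul_nonneg (sq_nonneg t) (mul_nonneg h8 h9)]
  have h10 : (1 - t + t*ρ)⁻¹ * (t*(ρ-1)) ≤ Real.log (1 - t + t*ρ) := by
    rw [← e2]; exact hL
  nlinarith [h10, e3, h6, h7]

lemma lintegral_ratio_le_one_of_bounded {Ω : Type*} [MeasurableSpace Ω]
    {Pfam : Set (Measure Ω)} (Q : Measure Ω) [IsProbabilityMeasure Q]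
    {Xs X : Ω → ℝ≥0∞} (hXs : IsEVar Pfam Xs) (hpos : ∀ᵐ ω ∂Q, 0 < Xs ω)
    (hopt : IsLogOptimal Pfam Q Xs) (hX : IsEVar Pfam X) (n : NNReal)
    (hbd : ∀ᵐ ω ∂Q, ERatio (X ω) (Xs ω) ≤ (n : ℝ≥0∞)) :
    ∫⁻ ω, ERatio (X ω) (Xs ω) ∂Q ≤ 1 := by
  have hrmeas : Measurable fun ω => ERatio (X ω) (Xs ω) := measurable_ERatio hX.1 hXs.1
  have main : ∀ t : ℝ, 0 < t → t ≤ 1/2 →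
      ∫⁻ ω, ERatio (X ω) (Xs ω) ∂Q ≤ 1 + ENNReal.ofReal (2*t*((n:ℝ)+1)^2) := by
    intro t ht0 ht
    set c₁ := ENNReal.ofReal (1-t) with hc₁def
    set c₂ := ENNReal.ofReal t with hc₂def
    have hc₁0 : c₁ ≠ 0 := by
      rw [hc₁def, Ne, ENNReal.ofReal_eq_zero]; push_neg; linarith
    have hc₂0 : c₂ ≠ 0 := by
      rw [hc₂def, Ne, ENNReal.ofReal_eq_zero]; push_neg; linarith
    have hc12 : c₁ + c₂ = 1 := by
      rw [hc₁def, hc₂def, ← ENNReal.ofReal_add (by linarith) ht0.le]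
      norm_num
    set Y := fun ω => c₁ * Xs ω + c₂ * X ω with hYdef
    have hYmeas : Measurable Y := (hXs.1.const_mul c₁).add (hX.1.const_mul c₂)
    have hYe : IsEVar Pfam Y := by
      refine ⟨hYmeas, fun P hP => ?_⟩
      calc ∫⁻ ω, Y ω ∂P = c₁ * (∫⁻ ω, Xs ω ∂P) + c₂ * ∫⁻ ω, X ω ∂P := by
            rw [hYdef]
            rw [lintegral_add_left (hXs.1.const_mul c₁), lintegral_const_mul c₁ hXs.1,
              lintegral_const_mul c₂ hX.1]
        _ ≤ c₁ * 1 + c₂ * 1 :=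
            add_le_add (mul_le_mul_right (hXs.2 P hP) c₁) (mul_le_mul_right (hX.2 P hP) c₂)
        _ = 1 := by rw [mul_one, mul_one, hc12]
    set u := fun ω => c₁ + c₂ * ERatio (X ω) (Xs ω) with hudef
    have humeas : Measurable u := (hrmeas.const_mul c₂).const_add c₁
    have hlog : ∀ᵐ ω ∂Q, ENNReal.log (u ω) ≤ ENNReal.log (ERatio (Y ω) (Xs ω)) := by
      filter_upwards [hpos, hbd] with ω hp hb
      rcases eq_or_ne (Xs ω) ⊤ with htop | hfin
      · have hY : Y ω = ⊤ := by
          rw [hYdef]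
          simp [htop, ENNReal.mul_top hc₁0]
        have h1 : ERatio (Y ω) (Xs ω) = 1 := by simp [ERatio, hY, htop]
        rw [h1, ENNReal.log_one]
        have hr1 : ERatio (X ω) (Xs ω) ≤ 1 := by
          by_cases hXt : X ω = ⊤ <;> simp [ERatio, hXt, htop, ENNReal.div_top]
        have hu1 : u ω ≤ 1 := by
          calc u ω ≤ c₁ + c₂ * 1 := add_le_add_right (mul_le_mul_right hr1 c₂) c₁
            _ = 1 := by rw [mul_one, hc12]
        calc ENNReal.log (u ω) ≤ ENNReal.log 1 := ENNReal.log_monotone hu1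
          _ = 0 := ENNReal.log_one
      · have hXfin : X ω ≠ ⊤ := by
          intro hXt
          have hrt : ERatio (X ω) (Xs ω) = ⊤ := by
            rw [ERatio, if_neg (by tauto), hXt]
            exact ENNReal.top_div_of_ne_top hfin
          rw [hrt] at hb
          exact absurd (lt_of_le_of_lt hb ENNReal.coe_lt_top) (lt_irrefl ⊤)
        have hYfin : Y ω ≠ ⊤ := by
          rw [hYdef]
          exact ENNReal.add_ne_top.mpr
            ⟨ENNReal.mul_ne_top (hc₁def ▸ ENNReal.ofReal_ne_top) hfin,
             ENNReal.mul_ne_top (hc₂def ▸ ENNReal.ofReal_ne_top) hXfin⟩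
        have hr : ERatio (X ω) (Xs ω) = X ω / Xs ω := by rw [ERatio, if_neg (by tauto)]
        have hs : ERatio (Y ω) (Xs ω) = Y ω / Xs ω := by rw [ERatio, if_neg (by tauto)]
        have hsplit : (c₁ * Xs ω + c₂ * X ω) / Xs ω = c₁ + c₂ * (X ω / Xs ω) := by
          rw [ENNReal.add_div, mul_div_assoc, mul_div_assoc, ENNReal.div_self hp.ne' hfin,
            mul_one]
        rw [hs, hYdef]
        simp only []
        rw [hsplit, hudef]
        simp only []
        rw [hr]
    have h0 : logInt Q u ≤ 0 := le_trans (logInt_mono Q hlog) (hopt Y hYe)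
    set k := ENNReal.ofReal (t + 2*t^2*((n:ℝ)+1)^2) with hkdef
    have hpt : ∀ᵐ ω ∂Q, c₂ * ERatio (X ω) (Xs ω) + (-(ENNReal.log (u ω))).posPart
        ≤ (ENNReal.log (u ω)).posPart + k := by
      filter_upwards [hbd] with ω hb
      have hrfin : ERatio (X ω) (Xs ω) ≠ ⊤ := (lt_of_le_of_lt hb ENNReal.coe_lt_top).ne
      set ρ := (ERatio (X ω) (Xs ω)).toReal with hρdef
      have hρ0 : 0 ≤ ρ := ENNReal.toReal_nonneg
      have hρn : ρ ≤ (n:ℝ) := by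
        rw [hρdef]
        calc (ERatio (X ω) (Xs ω)).toReal ≤ ((n:ℝ≥0∞)).toReal :=
              ENNReal.toReal_mono ENNReal.coe_ne_top hb
          _ = (n:ℝ) := ENNReal.coe_toReal n
      have hre : ERatio (X ω) (Xs ω) = ENNReal.ofReal ρ := (ENNReal.ofReal_toReal hrfin).symm
      have hu : u ω = ENNReal.ofReal (1 - t + t*ρ) := by
        rw [hudef]
        simp only []
        rw [hre, hc₂def, hc₁def, ← ENNReal.ofReal_mul ht0.le,
          ← ENNReal.ofReal_add (by linarith) (mul_nonneg ht0.le hρ0)]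
      have hx0 : (0:ℝ) < 1 - t + t*ρ := by nlinarith
      have hlogu : ENNReal.log (u ω) = ((Real.log (1 - t + t*ρ) : ℝ) : EReal) := by
        rw [hu, ENNReal.log_ofReal_of_pos hx0]
      rw [hlogu, ← EReal.coe_neg, posPart_coe, posPart_coe, hre, hc₂def,
        ← ENNReal.ofReal_mul ht0.le]
      have hmain := key2 ht0 ht hρ0 hρn
      calc ENNReal.ofReal (t*ρ) + ENNReal.ofReal (-(Real.log (1 - t + t*ρ)))
          ≤ ENNReal.ofReal (t*ρ) + ENNReal.ofReal (max (-(Real.log (1 - t + t*ρ))) 0) :=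
            add_le_add_right (ENNReal.ofReal_le_ofReal (le_max_left _ _)) _
        _ = ENNReal.ofReal (t*ρ + max (-(Real.log (1 - t + t*ρ))) 0) :=
            (ENNReal.ofReal_add (mul_nonneg ht0.le hρ0) (le_max_right _ _)).symm
        _ ≤ ENNReal.ofReal (max (Real.log (1 - t + t*ρ)) 0 + (t + 2*t^2*((n:ℝ)+1)^2)) :=
            ENNReal.ofReal_le_ofReal hmain
        _ = ENNReal.ofReal (max (Real.log (1 - t + t*ρ)) 0) + k := by
            rw [hkdef, ENNReal.ofReal_add (le_max_right _ _)
              (by nlinarith [sq_nonneg ((n:ℝ)+1), sq_nonneg t])]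
        _ = ENNReal.ofReal (Real.log (1 - t + t*ρ)) + k := by rw [ofReal_max_zero]
    set A := ∫⁻ ω, (ENNReal.log (u ω)).posPart ∂Q with hAdef
    set B := ∫⁻ ω, (-(ENNReal.log (u ω))).posPart ∂Q with hBdef
    have hmpos : Measurable fun ω => (ENNReal.log (u ω)).posPart :=
      measurable_ePosPart.comp (ENNReal.measurable_log.comp humeas)
    have hint : c₂ * (∫⁻ ω, ERatio (X ω) (Xs ω) ∂Q) + B ≤ A + k := by
      calc c₂ * (∫⁻ ω, ERatio (X ω) (Xs ω) ∂Q) + B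
          = ∫⁻ ω, (c₂ * ERatio (X ω) (Xs ω) + (-(ENNReal.log (u ω))).posPart) ∂Q := by
            rw [lintegral_add_left (hrmeas.const_mul c₂), lintegral_const_mul c₂ hrmeas]
        _ ≤ ∫⁻ ω, ((ENNReal.log (u ω)).posPart + k) ∂Q := lintegral_mono_ae hpt
        _ = A + k := by
            rw [lintegral_add_left hmpos, lintegral_const, measure_univ, mul_one]
    have hBle : B ≤ ENNReal.ofReal (Real.log 2) := by
      have hptB : ∀ ω, (-(ENNReal.log (u ω))).posPart ≤ ENNReal.ofReal (Real.log 2) := by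
        intro ω
        have hu2 : ENNReal.ofReal (1/2 : ℝ) ≤ u ω := by
          rw [hudef]
          simp only []
          calc ENNReal.ofReal (1/2 : ℝ) ≤ c₁ := by
                rw [hc₁def]; exact ENNReal.ofReal_le_ofReal (by linarith)
            _ ≤ c₁ + c₂ * ERatio (X ω) (Xs ω) := le_self_add
        have hlogge : ((Real.log (1/2 : ℝ) : ℝ) : EReal) ≤ ENNReal.log (u ω) := by
          rw [← ENNReal.log_ofReal_of_pos (by norm_num : (0:ℝ) < 1/2)]
          exact ENNReal.log_monotone hu2
        have hneg : -(ENNReal.log (u ω)) ≤ ((-(Real.log (1/2 : ℝ)) : ℝ) : EReal) := by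
          rw [EReal.coe_neg]
          exact EReal.neg_le_neg_iff.mpr hlogge
        calc (-(ENNReal.log (u ω))).posPart ≤ EReal.posPart ((-(Real.log (1/2:ℝ)) : ℝ) : EReal) :=
              ePosPart_mono hneg
          _ = ENNReal.ofReal (-(Real.log (1/2:ℝ))) := posPart_coe _
          _ = ENNReal.ofReal (Real.log 2) := by
              rw [show (1/2 : ℝ) = 2⁻¹ by norm_num, Real.log_inv, neg_neg]
      calc B ≤ ∫⁻ _, ENNReal.ofReal (Real.log 2) ∂Q := lintegral_mono hptB
        _ = ENNReal.ofReal (Real.log 2) := by rw [lintegral_const, measure_univ, mul_one]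
    have hBfin : B ≠ ⊤ := (lt_of_le_of_lt hBle ENNReal.ofReal_lt_top).ne
    have hAB : A ≤ B := enn_le_of_coe_sub_nonpos hBfin h0
    have hcancel : c₂ * (∫⁻ ω, ERatio (X ω) (Xs ω) ∂Q) ≤ k := by
      have h5 : c₂ * (∫⁻ ω, ERatio (X ω) (Xs ω) ∂Q) + B ≤ k + B := by
        calc c₂ * (∫⁻ ω, ERatio (X ω) (Xs ω) ∂Q) + B ≤ A + k := hint
          _ ≤ B + k := add_le_add_left hAB k
          _ = k + B := add_comm B k
      exact (ENNReal.add_le_add_iff_right hBfin).mp h5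
    have hkeq : k = c₂ * ENNReal.ofReal (1 + 2*t*((n:ℝ)+1)^2) := by
      rw [hkdef, hc₂def, ← ENNReal.ofReal_mul ht0.le]
      congr 1
      ring
    rw [hkeq] at hcancel
    have hfinal : ∫⁻ ω, ERatio (X ω) (Xs ω) ∂Q ≤ ENNReal.ofReal (1 + 2*t*((n:ℝ)+1)^2) :=
      (ENNReal.mul_le_mul_iff_right hc₂0 ENNReal.ofReal_ne_top).mp hcancel
    calc ∫⁻ ω, ERatio (X ω) (Xs ω) ∂Q ≤ ENNReal.ofReal (1 + 2*t*((n:ℝ)+1)^2) := hfinal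
      _ = 1 + ENNReal.ofReal (2*t*((n:ℝ)+1)^2) := by
          rw [ENNReal.ofReal_add (by norm_num)
            (by nlinarith [sq_nonneg ((n:ℝ)+1)]), ENNReal.ofReal_one]
  apply ENNReal.le_of_forall_pos_le_add
  intro ε hε _
  have hεR : (0:ℝ) < (ε:ℝ) := hε
  have hden : (0:ℝ) < 2*((n:ℝ)+1)^2 := by positivity
  set t := min (1/2 : ℝ) ((ε:ℝ) / (2*((n:ℝ)+1)^2)) with htdef
  have ht0 : 0 < t := lt_min (by norm_num) (div_pos hεR hden)
  have ht : t ≤ 1/2 := min_le_left _ _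
  refine le_trans (main t ht0 ht) (add_le_add_right ?_ 1)
  have h6 : 2*t*((n:ℝ)+1)^2 ≤ (ε:ℝ) := by
    have h7 : t ≤ (ε:ℝ) / (2*((n:ℝ)+1)^2) := min_le_right _ _
    calc 2*t*((n:ℝ)+1)^2 = t * (2*((n:ℝ)+1)^2) := by ring
      _ ≤ ((ε:ℝ) / (2*((n:ℝ)+1)^2)) * (2*((n:ℝ)+1)^2) :=
          mul_le_mul_of_nonneg_right h7 hden.le
      _ = (ε:ℝ) := div_mul_cancel₀ _ hden.ne'
  calc ENNReal.ofReal (2*t*((n:ℝ)+1)^2) ≤ ENNReal.ofReal (ε:ℝ) := ENNReal.ofReal_le_ofReal h6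
    _ = (ε : ℝ≥0∞) := ENNReal.ofReal_coe_nnreal


lemma ratio_lintegral_le_one {Ω : Type*} [MeasurableSpace Ω]
    {Pfam : Set (Measure Ω)} (Q : Measure Ω) [IsProbabilityMeasure Q]
    {Xs : Ω → ℝ≥0∞} (hXs : IsEVar Pfam Xs) (hpos : ∀ᵐ ω ∂Q, 0 < Xs ω)
    (hopt : IsLogOptimal Pfam Q Xs) {X : Ω → ℝ≥0∞} (hX : IsEVar Pfam X) :
    ∫⁻ ω, ERatio (X ω) (Xs ω) ∂Q ≤ 1 := by
  have hrmeas : Measurable fun ω => ERatio (X ω) (Xs ω) := measurable_ERatio hX.1 hXs.1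
  set Xm := fun (m : ℕ) (ω : Ω) => min (X ω) (((m:ℝ≥0∞)+1) * Xs ω) with hXmdef
  have hXme : ∀ m, IsEVar Pfam (Xm m) := fun m =>
    ⟨hX.1.min (hXs.1.const_mul _), fun P hP =>
      le_trans (lintegral_mono fun ω => min_le_left _ _) (hX.2 P hP)⟩
  have heq : ∀ m : ℕ, ∀ᵐ ω ∂Q,
      ERatio (Xm m ω) (Xs ω) = min (ERatio (X ω) (Xs ω)) ((m:ℝ≥0∞)+1) := by
    intro m
    filter_upwards [hpos] with ω hp
    rcases eq_or_ne (Xs ω) ⊤ with htop | hfin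
    · have hmul : ((m:ℝ≥0∞)+1) * Xs ω = ⊤ := by
        rw [htop, ENNReal.mul_top (by simp)]
      have hXmω : Xm m ω = X ω := by
        rw [hXmdef]
        simp only []
        rw [hmul]
        exact min_eq_left le_top
      rw [hXmω]
      have hr1 : ERatio (X ω) (Xs ω) ≤ 1 := by
        by_cases hXt : X ω = ⊤ <;> simp [ERatio, hXt, htop, ENNReal.div_top]
      exact (min_eq_left (le_trans hr1 (le_add_self))).symm
    · have h1 : ERatio (Xm m ω) (Xs ω) = (Xm m ω) / Xs ω := by
        rw [ERatio, if_neg (by tauto)]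
      have h2 : ERatio (X ω) (Xs ω) = X ω / Xs ω := by
        rw [ERatio, if_neg (by tauto)]
      have hmono : Monotone (fun a : ℝ≥0∞ => a / Xs ω) := by
        intro a b hab
        show a / Xs ω ≤ b / Xs ω
        rw [div_eq_mul_inv, div_eq_mul_inv]
        exact mul_le_mul_left hab _
      rw [h1, h2, hXmdef]
      simp only []
      rw [hmono.map_min]
      show X ω / Xs ω ⊓ (((m:ℝ≥0∞)+1) * Xs ω / Xs ω) = _
      rw [mul_div_assoc, ENNReal.div_self hp.ne' hfin, mul_one]
  have hlim : ∀ m : ℕ, ∫⁻ ω, min (ERatio (X ω) (Xs ω)) ((m:ℝ≥0∞)+1) ∂Q ≤ 1 := by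
    intro m
    rw [← lintegral_congr_ae (heq m)]
    refine lintegral_ratio_le_one_of_bounded Q hXs hpos hopt (hXme m) ((m:NNReal)+1) ?_
    filter_upwards [heq m] with ω hω
    rw [hω]
    refine le_trans (min_le_right _ _) (le_of_eq ?_)
    push_cast
    rfl
  have hmono2 : Monotone fun (m:ℕ) (ω:Ω) => min (ERatio (X ω) (Xs ω)) ((m:ℝ≥0∞)+1) := by
    intro m m' h ω
    exact min_le_min le_rfl (add_le_add_left (by exact_mod_cast h) 1)
  have hsuptop : (⨆ m:ℕ, ((m:ℝ≥0∞)+1)) = ⊤ := by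
    refine le_antisymm le_top ?_
    rw [← ENNReal.iSup_natCast]
    exact iSup_mono fun m => le_self_add
  have hsup : ∀ ω, (⨆ m:ℕ, min (ERatio (X ω) (Xs ω)) ((m:ℝ≥0∞)+1)) = ERatio (X ω) (Xs ω) := by
    intro ω
    have : (⨆ m:ℕ, min (ERatio (X ω) (Xs ω)) ((m:ℝ≥0∞)+1))
        = ERatio (X ω) (Xs ω) ⊓ ⨆ m:ℕ, ((m:ℝ≥0∞)+1) := (inf_iSup_eq _ _).symm
    rw [this, hsuptop, inf_top_eq]
  calc ∫⁻ ω, ERatio (X ω) (Xs ω) ∂Q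
      = ∫⁻ ω, ⨆ m:ℕ, min (ERatio (X ω) (Xs ω)) ((m:ℝ≥0∞)+1) ∂Q :=
        lintegral_congr fun ω => (hsup ω).symm
    _ = ⨆ m:ℕ, ∫⁻ ω, min (ERatio (X ω) (Xs ω)) ((m:ℝ≥0∞)+1) ∂Q :=
        lintegral_iSup (fun m => hrmeas.min measurable_const) hmono2
    _ ≤ 1 := iSup_le hlim


lemma two_le_eratio_sum {a b : ℝ≥0∞} (ha : 0 < a) (hb : 0 < b) :
    2 ≤ ERatio a b + ERatio b a := by
  rcases eq_or_ne a ⊤ with rfl | hat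
  · rcases eq_or_ne b ⊤ with rfl | hbt
    · norm_num [ERatio]
    · have h1 : ERatio ⊤ b = ⊤ := by
        rw [ERatio, if_neg (by tauto)]
        exact ENNReal.top_div_of_ne_top hbt
      rw [h1, top_add]
      exact le_top
  · rcases eq_or_ne b ⊤ with rfl | hbt
    · have h1 : ERatio ⊤ a = ⊤ := by
        rw [ERatio, if_neg (by tauto)]
        exact ENNReal.top_div_of_ne_top hat
      rw [h1]
      rw [add_top]
      exact le_top
    · have hx : 0 < a.toReal := ENNReal.toReal_pos ha.ne' hat
      have hy : 0 < b.toReal := ENNReal.toReal_pos hb.ne' hbt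
      have hab : ERatio a b = ENNReal.ofReal (a.toReal / b.toReal) := by
        rw [ERatio, if_neg (by tauto), ENNReal.ofReal_div_of_pos hy,
          ENNReal.ofReal_toReal hat, ENNReal.ofReal_toReal hbt]
      have hba : ERatio b a = ENNReal.ofReal (b.toReal / a.toReal) := by
        rw [ERatio, if_neg (by tauto), ENNReal.ofReal_div_of_pos hx,
          ENNReal.ofReal_toReal hbt, ENNReal.ofReal_toReal hat]
      rw [hab, hba, ← ENNReal.ofReal_add (div_nonneg hx.le hy.le) (div_nonneg hy.le hx.le),
        show (2:ℝ≥0∞) = ENNReal.ofReal 2 by norm_num]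
      apply ENNReal.ofReal_le_ofReal
      rw [div_add_div _ _ hy.ne' hx.ne', le_div_iff₀ (mul_pos hy hx)]
      nlinarith [sq_nonneg (a.toReal - b.toReal)]

lemma eratio_eq_of_sum_le {a b : ℝ≥0∞} (ha : 0 < a) (hb : 0 < b)
    (h : ERatio a b + ERatio b a ≤ 2) : a = b := by
  rcases eq_or_ne a ⊤ with rfl | hat
  · rcases eq_or_ne b ⊤ with rfl | hbt
    · rfl
    · exfalso
      have h1 : ERatio ⊤ b = ⊤ := by
        rw [ERatio, if_neg (by tauto)]
        exact ENNReal.top_div_of_ne_top hbt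
      rw [h1, top_add] at h
      exact absurd (lt_of_le_of_lt h (by norm_num)) (lt_irrefl ⊤)
  · rcases eq_or_ne b ⊤ with rfl | hbt
    · exfalso
      have h1 : ERatio ⊤ a = ⊤ := by
        rw [ERatio, if_neg (by tauto)]
        exact ENNReal.top_div_of_ne_top hat
      rw [h1, add_top] at h
      exact absurd (lt_of_le_of_lt h (by norm_num)) (lt_irrefl ⊤)
    · have hx : 0 < a.toReal := ENNReal.toReal_pos ha.ne' hat
      have hy : 0 < b.toReal := ENNReal.toReal_pos hb.ne' hbt
      have hab : ERatio a b = ENNReal.ofReal (a.toReal / b.toReal) := by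
        rw [ERatio, if_neg (by tauto), ENNReal.ofReal_div_of_pos hy,
          ENNReal.ofReal_toReal hat, ENNReal.ofReal_toReal hbt]
      have hba : ERatio b a = ENNReal.ofReal (b.toReal / a.toReal) := by
        rw [ERatio, if_neg (by tauto), ENNReal.ofReal_div_of_pos hx,
          ENNReal.ofReal_toReal hbt, ENNReal.ofReal_toReal hat]
      rw [hab, hba, ← ENNReal.ofReal_add (div_nonneg hx.le hy.le) (div_nonneg hy.le hx.le),
        show (2:ℝ≥0∞) = ENNReal.ofReal 2 by norm_num] at h
      have h2 : a.toReal/b.toReal + b.toReal/a.toReal ≤ 2 :=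
        (ENNReal.ofReal_le_ofReal_iff (by norm_num)).mp h
      have heq : a.toReal = b.toReal := by
        rw [div_add_div _ _ hy.ne' hx.ne', div_le_iff₀ (mul_pos hy hx)] at h2
        nlinarith [sq_nonneg (a.toReal - b.toReal)]
      exact (ENNReal.toReal_eq_toReal_iff' hat hbt).mp heq

/-- A Q-a.s. strictly positive e-variable is a numeraire iff it is log-optimal;
in particular a log-optimal e-variable is unique up to Q-null sets. -/
theorem numeraire_iff_logOptimal (Pfam : Set (Measure Ω)) (hne : Pfam.Nonempty)
    (hprob : ∀ P ∈ Pfam, IsProbabilityMeasure P)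
    (Q : Measure Ω) [IsProbabilityMeasure Q] :
    (∀ Xs : Ω → ℝ≥0∞, IsEVar Pfam Xs → (∀ᵐ ω ∂Q, 0 < Xs ω) →
      (IsNumeraire Pfam Q Xs ↔ IsLogOptimal Pfam Q Xs)) ∧
    (∀ Xs₁ Xs₂ : Ω → ℝ≥0∞,
      IsEVar Pfam Xs₁ → (∀ᵐ ω ∂Q, 0 < Xs₁ ω) → IsLogOptimal Pfam Q Xs₁ →
      IsEVar Pfam Xs₂ → (∀ᵐ ω ∂Q, 0 < Xs₂ ω) → IsLogOptimal Pfam Q Xs₂ →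
      Xs₁ =ᵐ[Q] Xs₂) := by
  have hiff : ∀ Xs : Ω → ℝ≥0∞, IsEVar Pfam Xs → (∀ᵐ ω ∂Q, 0 < Xs ω) →
      (IsNumeraire Pfam Q Xs ↔ IsLogOptimal Pfam Q Xs) := by
    intro Xs hE hpos
    constructor
    · intro hnum X hX
      exact logInt_nonpos Q (measurable_ERatio hX.1 hE.1) (hnum.2.2 X hX)
    · intro hopt
      exact ⟨hE, hpos, fun X hX => ratio_lintegral_le_one Q hE hpos hopt hX⟩
  refine ⟨hiff, ?_⟩
  intro Xs₁ Xs₂ hE1 hpos1 hopt1 hE2 hpos2 hopt2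
  have h12 : ∫⁻ ω, ERatio (Xs₁ ω) (Xs₂ ω) ∂Q ≤ 1 :=
    ratio_lintegral_le_one Q hE2 hpos2 hopt2 hE1
  have h21 : ∫⁻ ω, ERatio (Xs₂ ω) (Xs₁ ω) ∂Q ≤ 1 :=
    ratio_lintegral_le_one Q hE1 hpos1 hopt1 hE2
  set g := fun ω => ERatio (Xs₁ ω) (Xs₂ ω) + ERatio (Xs₂ ω) (Xs₁ ω) with hgdef
  have hm1 : Measurable fun ω => ERatio (Xs₁ ω) (Xs₂ ω) := measurable_ERatio hE1.1 hE2.1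
  have hm2 : Measurable fun ω => ERatio (Xs₂ ω) (Xs₁ ω) := measurable_ERatio hE2.1 hE1.1
  have hgmeas : Measurable g := hm1.add hm2
  have hgge : ∀ᵐ ω ∂Q, 2 ≤ g ω := by
    filter_upwards [hpos1, hpos2] with ω h1 h2
    exact two_le_eratio_sum h1 h2
  have hgle : ∫⁻ ω, g ω ∂Q ≤ 2 := by
    rw [hgdef, lintegral_add_left hm1]
    calc (∫⁻ ω, ERatio (Xs₁ ω) (Xs₂ ω) ∂Q) + ∫⁻ ω, ERatio (Xs₂ ω) (Xs₁ ω) ∂Q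
        ≤ 1 + 1 := add_le_add h12 h21
      _ = 2 := one_add_one_eq_two
  have h2g : ∫⁻ ω, g ω ∂Q = 2 := by
    refine le_antisymm hgle ?_
    calc (2:ℝ≥0∞) = ∫⁻ _, 2 ∂Q := by simp
      _ ≤ ∫⁻ ω, g ω ∂Q := lintegral_mono_ae hgge
  have hsub : ∫⁻ ω, (g ω - 2) ∂Q = 0 := by
    rw [lintegral_sub measurable_const (by simp) hgge, h2g]
    simp
  have hae : ∀ᵐ ω ∂Q, g ω - 2 = 0 :=
    (lintegral_eq_zero_iff (hgmeas.sub measurable_const)).mp hsub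
  filter_upwards [hpos1, hpos2, hae] with ω h1ω h2ω h3ω
  exact eratio_eq_of_sum_le h1ω h2ω (tsub_eq_zero_iff_le.mp h3ω)
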